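/- If a triple (t, r, q) of nonzero polynomials in ℚ[x] parameterizes a complete family of pairing-friendly elliptic curves with embedding degree k = 12 and CM discriminant D = 1, and deg r ≠ 2·deg t, then ρ(t, r, q) ≠ 1, i.e., deg q ≠ deg r. -/

import Mathlib

/-!
Write `Φ₁₂(t - 1) = t²(t - 2)² + (t - 1)²` and `4(q + 1 - t) = y² + (t - 2)²`. Then
`4t²(q + 1 - t) - Φ₁₂(t - 1) = (ty)² - (t - 1)²`, so the prime `r` divides `ty - (t - 1)` or
`ty + (t - 1)`. Since `4q = y² + t²` is a sum of squares, `deg q = 2 max(deg y, deg t)`, and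
`deg r = deg q ≠ 2 deg t` forces `deg y > deg t`. Both factors then have degree
`deg t + deg y < 2 deg y = deg r`, which is impossible.
-/

open Polynomial

/-- `f ∈ ℚ[x]` represents integers: there is an integer `a` with `f(a) ∈ ℤ`. -/
def RepresentsIntegers (f : ℚ[X]) : Prop :=
  ∃ a n : ℤ, f.eval (a : ℚ) = (n : ℚ)

/-- `f ∈ ℚ[x]` represents primes: `f` is nonconstant, irreducible over `ℚ`,
has positive leading coefficient, represents integers, and no prime number
divides every integer value `f(a)` with `a ∈ ℤ`, `f(a) ∈ ℤ`. -/
def RepresentsPrimes (f : ℚ[X]) : Prop :=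
  0 < f.natDegree ∧ Irreducible f ∧ 0 < f.leadingCoeff ∧ RepresentsIntegers f ∧
    ∀ p : ℕ, p.Prime → ∃ a n : ℤ, f.eval (a : ℚ) = (n : ℚ) ∧ ¬ (p : ℤ) ∣ n

/-- `(t, r, q)` parameterizes a complete family of pairing-friendly elliptic curves
with embedding degree `k` and CM discriminant `D`:
(i) `r` represents primes; (ii) `q` represents primes; (iii) `r ∣ q + 1 - t`;
(iv) `r ∣ Φ_k(t - 1)`; (v) `D·y² = 4q - t²` for some `y ∈ ℚ[x]`. -/
def IsCompleteFamily (k D : ℕ) (t r q : ℚ[X]) : Prop :=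
  t ≠ 0 ∧ r ≠ 0 ∧ q ≠ 0 ∧
  RepresentsPrimes r ∧ RepresentsPrimes q ∧
  r ∣ (q + 1 - t) ∧
  r ∣ (cyclotomic k ℚ).comp (t - 1) ∧
  ∃ y : ℚ[X], (D : ℚ[X]) * y ^ 2 = 4 * q - t ^ 2

namespace Polynomial

theorem cyclotomic_twelve (R : Type*) [CommRing R] : cyclotomic 12 R = X ^ 4 - X ^ 2 + 1 := by
  rw [show 12 = 6 * 2 by rfl, ← cyclotomic_expand_eq_cyclotomic Nat.prime_two (by norm_num)]
  simp only [cyclotomic_six, map_add, map_sub, map_pow, expand_X, map_one]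
  ring

section CommRing

variable {R : Type*} [CommRing R]

theorem cyclotomic_twelve_comp_sub_one (t : R[X]) :
    (cyclotomic 12 R).comp (t - 1) = t ^ 2 * (t - 2) ^ 2 + (t - 1) ^ 2 := by
  rw [cyclotomic_twelve]
  simp only [sub_comp, add_comp, pow_comp, X_comp, one_comp]
  ring

theorem dvd_sq_sub_sq_of_dvd_cyclotomic_twelve_comp {t r q y : R[X]} (hy : y ^ 2 = 4 * q - t ^ 2)
    (hrq : r ∣ q + 1 - t) (hrΦ : r ∣ (cyclotomic 12 R).comp (t - 1)) :
    r ∣ (t * y) ^ 2 - (t - 1) ^ 2 := by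
  have hid : (t * y) ^ 2 - (t - 1) ^ 2
      = 4 * t ^ 2 * (q + 1 - t) - (cyclotomic 12 R).comp (t - 1) := by
    rw [cyclotomic_twelve_comp_sub_one, mul_pow, hy]
    ring
  rw [hid]
  exact dvd_sub (dvd_mul_of_dvd_right hrq _) hrΦ

end CommRing

theorem _root_.Prime.natDegree_le_of_dvd_sq_sub_sq {R : Type*} [CommRing R] [IsDomain R]
    {r a b : R[X]} (hr : Prime r) (hba : b.natDegree < a.natDegree) (h : r ∣ a ^ 2 - b ^ 2) :
    r.natDegree ≤ a.natDegree := by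
  have hadd : (a + b).natDegree = a.natDegree := natDegree_add_eq_left_of_natDegree_lt hba
  have hsub : (a - b).natDegree = a.natDegree := natDegree_sub_eq_left_of_natDegree_lt hba
  rw [sq_sub_sq] at h
  rcases hr.dvd_or_dvd h with h | h
  · rw [← hadd]
    exact natDegree_le_of_dvd h (ne_zero_of_natDegree_gt (hadd ▸ hba))
  · rw [← hsub]
    exact natDegree_le_of_dvd h (ne_zero_of_natDegree_gt (hsub ▸ hba))

theorem natDegree_sq_add_sq {R : Type*} [CommRing R] [LinearOrder R] [IsStrictOrderedRing R]
    (p s : R[X]) : (p ^ 2 + s ^ 2).natDegree = max (2 * p.natDegree) (2 * s.natDegree) := by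
  by_cases hps : p = 0 ∧ s = 0
  · simp [hps.1, hps.2]
  have hlc : (p ^ 2).leadingCoeff + (s ^ 2).leadingCoeff ≠ 0 := by
    rwa [leadingCoeff_pow, leadingCoeff_pow, sq, sq, Ne, mul_self_add_mul_self_eq_zero,
      leadingCoeff_eq_zero, leadingCoeff_eq_zero]
  have hdeg := degree_add_eq_of_leadingCoeff_add_ne_zero hlc
  rw [← natDegree_pow, ← natDegree_pow]
  rcases le_total (p ^ 2).degree (s ^ 2).degree with hle | hle
  · rw [max_eq_right hle] at hdeg
    rw [natDegree_eq_of_degree_eq hdeg, max_eq_right (natDegree_le_natDegree hle)]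
  · rw [max_eq_left hle] at hdeg
    rw [natDegree_eq_of_degree_eq hdeg, max_eq_left (natDegree_le_natDegree hle)]

end Polynomial

/-- No ideal complete family with embedding degree 12 and CM discriminant 1 when
`deg r ≠ 2 deg t`. -/
theorem no_ideal_family_k12_D1 (t r q : ℚ[X]) (h : IsCompleteFamily 12 1 t r q)
    (hdeg : r.natDegree ≠ 2 * t.natDegree) :
    q.natDegree ≠ r.natDegree := by
  obtain ⟨ht, -, -, ⟨-, hr, -⟩, -, hrq, hrΦ, y, hy⟩ := h
  rw [Nat.cast_one, one_mul] at hy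
  intro hqr
  have hq : q.natDegree = max (2 * y.natDegree) (2 * t.natDegree) := by
    rw [← natDegree_sq_add_sq, ← natDegree_C_mul (a := (4 : ℚ)) four_ne_zero]
    congr 1
    rw [hy, C_ofNat]
    ring
  have hty : t.natDegree < y.natDegree := by omega
  have hy0 : y ≠ 0 := ne_zero_of_natDegree_gt hty
  have hlt : (t - 1).natDegree < (t * y).natDegree := by
    rw [natDegree_mul ht hy0, ← C_1, natDegree_sub_C]
    omega
  have hr_le := hr.prime.natDegree_le_of_dvd_sq_sub_sq hlt
    (dvd_sq_sub_sq_of_dvd_cyclotomic_twelve_comp hy hrq hrΦ)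
  rw [natDegree_mul ht hy0] at hr_le
  omega
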